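/- Let (f,g,h,ρ) be a general warped Berger solution of Ricci flow on S^1×S^3 defined on [0,T). If g(ξ,0) ≤ h(ξ,0) for all ξ ∈ S^1, then g(ξ,t) ≤ h(ξ,t) for all (ξ,t) ∈ S^1×[0,T). (By the permutation symmetry of the system, any ordering among f, g, h that holds at t=0 is preserved for all t ∈ [0,T).) -/

import Mathlib

open Real Set Filter Topology
open scoped ENNReal

noncomputable section

/-- Partial derivative in the first (spatial, `ξ`) variable. -/
def pd1 (φ : ℝ → ℝ → ℝ) (ξ t : ℝ) : ℝ := deriv (fun x => φ x t) ξ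

/-- Partial derivative in the second (time) variable: `φ_t`. -/
def pdt (φ : ℝ → ℝ → ℝ) (ξ t : ℝ) : ℝ := deriv (fun τ => φ ξ τ) t

/-- Derivative with respect to arclength `s` (where `ds = ρ dξ`): `φ_s := ρ⁻¹ ∂_ξ φ`. -/
def Ds (ρ φ : ℝ → ℝ → ℝ) (ξ t : ℝ) : ℝ := pd1 φ ξ t / ρ ξ t

/-- `t` lies in the existence interval `[0,T)`, where `T ∈ (0,∞]`. -/
def InDom (T : ℝ≥0∞) (t : ℝ) : Prop := 0 ≤ t ∧ ENNReal.ofReal t < T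

/-- Fiber sectional curvature `κ̂₁₂ = (f²−g²)²/(fgh)² − 3h²/(fg)² + 2/f² + 2/g²`. -/
def hk12 (f g h : ℝ → ℝ → ℝ) (ξ t : ℝ) : ℝ :=
  ((f ξ t) ^ 2 - (g ξ t) ^ 2) ^ 2 / (f ξ t * g ξ t * h ξ t) ^ 2
    - 3 * (h ξ t) ^ 2 / (f ξ t * g ξ t) ^ 2 + 2 / (f ξ t) ^ 2 + 2 / (g ξ t) ^ 2

/-- Fiber sectional curvature `κ̂₂₃ = (g²−h²)²/(fgh)² − 3f²/(gh)² + 2/g² + 2/h²`. -/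
def hk23 (f g h : ℝ → ℝ → ℝ) (ξ t : ℝ) : ℝ :=
  ((g ξ t) ^ 2 - (h ξ t) ^ 2) ^ 2 / (f ξ t * g ξ t * h ξ t) ^ 2
    - 3 * (f ξ t) ^ 2 / (g ξ t * h ξ t) ^ 2 + 2 / (g ξ t) ^ 2 + 2 / (h ξ t) ^ 2

/-- Fiber sectional curvature `κ̂₃₁ = (f²−h²)²/(fgh)² − 3g²/(fh)² + 2/f² + 2/h²`. -/
def hk31 (f g h : ℝ → ℝ → ℝ) (ξ t : ℝ) : ℝ :=
  ((f ξ t) ^ 2 - (h ξ t) ^ 2) ^ 2 / (f ξ t * g ξ t * h ξ t) ^ 2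
    - 3 * (g ξ t) ^ 2 / (f ξ t * h ξ t) ^ 2 + 2 / (f ξ t) ^ 2 + 2 / (h ξ t) ^ 2

/-- A general warped Berger solution `(f,g,h,ρ)` of Ricci flow on `S¹ × S³` with
existence time `T ∈ (0,∞]`:  smooth positive `2π`-periodic-in-`ξ` functions on
`S¹ × [0,T)` satisfying
  `f_t = f_ss + (g_s/g + h_s/h) f_s − f(κ̂₁₂ + κ̂₃₁)`,
  `g_t = g_ss + (f_s/f + h_s/h) g_s − g(κ̂₁₂ + κ̂₂₃)`,
  `h_t = h_ss + (f_s/f + g_s/g) h_s − h(κ̂₂₃ + κ̂₃₁)`,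
  `(log ρ)_t = f_ss/f + g_ss/g + h_ss/h`. -/
structure GeneralWarpedBerger (T : ℝ≥0∞) (f g h ρ : ℝ → ℝ → ℝ) : Prop where
  T_pos : 0 < T
  f_pos : ∀ ξ t : ℝ, InDom T t → 0 < f ξ t
  g_pos : ∀ ξ t : ℝ, InDom T t → 0 < g ξ t
  h_pos : ∀ ξ t : ℝ, InDom T t → 0 < h ξ t
  ρ_pos : ∀ ξ t : ℝ, InDom T t → 0 < ρ ξ t
  f_per : ∀ ξ t : ℝ, f (ξ + 2 * π) t = f ξ t
  g_per : ∀ ξ t : ℝ, g (ξ + 2 * π) t = g ξ t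
  h_per : ∀ ξ t : ℝ, h (ξ + 2 * π) t = h ξ t
  ρ_per : ∀ ξ t : ℝ, ρ (ξ + 2 * π) t = ρ ξ t
  smooth : ContDiffOn ℝ (⊤ : ℕ∞)
      (fun p : ℝ × ℝ => (f p.1 p.2, g p.1 p.2, h p.1 p.2, ρ p.1 p.2))
      (Set.univ ×ˢ {t : ℝ | InDom T t})
  eq_f : ∀ ξ t : ℝ, 0 < t → InDom T t →
    pdt f ξ t = Ds ρ (Ds ρ f) ξ t
      + (Ds ρ g ξ t / g ξ t + Ds ρ h ξ t / h ξ t) * Ds ρ f ξ t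
      - f ξ t * (hk12 f g h ξ t + hk31 f g h ξ t)
  eq_g : ∀ ξ t : ℝ, 0 < t → InDom T t →
    pdt g ξ t = Ds ρ (Ds ρ g) ξ t
      + (Ds ρ f ξ t / f ξ t + Ds ρ h ξ t / h ξ t) * Ds ρ g ξ t
      - g ξ t * (hk12 f g h ξ t + hk23 f g h ξ t)
  eq_h : ∀ ξ t : ℝ, 0 < t → InDom T t →
    pdt h ξ t = Ds ρ (Ds ρ h) ξ t
      + (Ds ρ f ξ t / f ξ t + Ds ρ g ξ t / g ξ t) * Ds ρ h ξ t
      - h ξ t * (hk23 f g h ξ t + hk31 f g h ξ t)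
  eq_ρ : ∀ ξ t : ℝ, 0 < t → InDom T t →
    pdt (fun x τ => Real.log (ρ x τ)) ξ t
      = Ds ρ (Ds ρ f) ξ t / f ξ t + Ds ρ (Ds ρ g) ξ t / g ξ t + Ds ρ (Ds ρ h) ξ t / h ξ t

open Function

/-!
Write `w = h - g`. At a point where `w` attains its spatial minimum we have `g_s = h_s`, and there
the equations for `g` and `h` combine into `w_t = w_ss + c w`: the first-order terms differ by
`g_s h_s (1/g - 1/h)`, and `g (κ̂₁₂ + κ̂₂₃) - h (κ̂₂₃ + κ̂₃₁)` is divisible by `g - h`.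
The coefficient `c` is continuous on the compact set `S¹ × [0, t]`, hence bounded above by some
`Λ`, and `w_ss ≥ 0` at a minimum. The scalar maximum principle then applies to the barrier
`e^{-Λt} w + ε (1 + t)`: at its first nonpositive time it would sit at a spatial minimum where its
time derivative is at least `ε > 0`, although it was positive just before. Letting `ε → 0` gives
`w ≥ 0`.
-/

theorem IsLocalMin.deriv_deriv_nonneg {φ : ℝ → ℝ} {a : ℝ} (hmin : IsLocalMin φ a)
    (hc : ContinuousAt φ a) : 0 ≤ deriv (deriv φ) a := by
  by_contra! hneg
  have hmax := isLocalMax_of_deriv_deriv_neg hneg hmin.deriv_eq_zero hc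
  have hconst : φ =ᶠ[𝓝 a] fun _ => φ a :=
    (hmin.and hmax).mono fun x hx => le_antisymm hx.2 hx.1
  rw [hconst.deriv.deriv_eq, deriv_const', deriv_const] at hneg
  exact hneg.false

theorem HasDerivAt.nonpos_of_isMinOn_Ioc {ψ : ℝ → ℝ} {a b d : ℝ} (hd : HasDerivAt ψ d a)
    (hba : b < a) (hmin : IsMinOn ψ (Ioc b a) a) : d ≤ 0 := by
  have hslope : Tendsto (slope ψ a) (𝓝[<] a) (𝓝 d) :=
    (hasDerivAt_iff_tendsto_slope.mp hd).mono_left (nhdsWithin_mono a fun _ hx => ne_of_lt hx)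
  refine le_of_tendsto hslope ?_
  filter_upwards [Ioo_mem_nhdsLT hba] with t ht
  rw [slope_def_field]
  exact div_nonpos_of_nonneg_of_nonpos (sub_nonneg.mpr (hmin ⟨ht.1, ht.2.le⟩))
    (sub_nonpos.mpr ht.2.le)

section MaximumPrinciple

variable {v w : ℝ → ℝ → ℝ} {p t₀ Λ : ℝ}

theorem exists_first_nonpos_of_periodic (hp : 0 < p) (hper : ∀ t, Periodic (v · t) p)
    (hcont : ContinuousOn (uncurry v) (Icc 0 p ×ˢ Icc 0 t₀))
    (hex : ∃ x, ∃ t ∈ Icc 0 t₀, v x t ≤ 0) :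
    ∃ x ∈ Icc 0 p, ∃ s ∈ Icc 0 t₀, v x s ≤ 0 ∧ (∀ y, v x s ≤ v y s) ∧
      ∀ y, ∀ t ∈ Ico 0 s, 0 < v y t := by
  have hfund : ∀ t y, ∃ y' ∈ Icc 0 p, v y t = v y' t := fun t y =>
    let ⟨y', hy', hy⟩ := (hper t).exists_mem_Ico₀ hp y
    ⟨y', Ico_subset_Icc_self hy', hy⟩
  have hK : IsCompact (Icc 0 p ×ˢ Icc 0 t₀) := isCompact_Icc.prod isCompact_Icc
  set B := Icc 0 p ×ˢ Icc 0 t₀ ∩ uncurry v ⁻¹' Iic 0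
  have hB : IsCompact B :=
    hK.of_isClosed_subset (hcont.preimage_isClosed_of_isClosed hK.isClosed isClosed_Iic)
      inter_subset_left
  have hBne : B.Nonempty := by
    obtain ⟨x, t, ht, hxt⟩ := hex
    obtain ⟨x', hx', hx⟩ := hfund t x
    exact ⟨(x', t), ⟨⟨hx', ht⟩, show v x' t ≤ 0 from hx ▸ hxt⟩⟩
  obtain ⟨⟨x₁, s⟩, ⟨⟨hx₁, hs⟩, hx₁s⟩, hs_inf⟩ :=
    (hB.image continuous_snd).sInf_mem (hBne.image _)
  obtain ⟨x, hx, hxmin⟩ := isCompact_Icc.exists_isMinOn ⟨0, left_mem_Icc.mpr hp.le⟩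
    (hcont.comp (continuous_id.prodMk continuous_const).continuousOn fun y hy => ⟨hy, hs⟩ :
      ContinuousOn (fun y => v y s) (Icc 0 p))
  have hglobal : ∀ y, v x s ≤ v y s := fun y => by
    obtain ⟨y', hy', hy⟩ := hfund s y
    exact hy ▸ hxmin hy'
  refine ⟨x, hx, s, hs, (hxmin hx₁).trans hx₁s, hglobal, fun y t ht => ?_⟩
  obtain ⟨y', hy', hy⟩ := hfund t y
  rw [hy]
  by_contra! hle
  have : s ≤ t := hs_inf.trans_le <| csInf_le (hB.image continuous_snd).bddBelow
    ⟨(y', t), ⟨⟨hy', ht.1, ht.2.le.trans hs.2⟩, hle⟩, rfl⟩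
  exact absurd ht.2 this.not_gt

theorem pos_of_deriv_pos_at_nonpos_min (hp : 0 < p)
    (hper : ∀ t, Periodic (v · t) p)
    (hcont : ContinuousOn (uncurry v) (Icc 0 p ×ˢ Icc 0 t₀)) (h0 : ∀ x, 0 < v x 0)
    (hdiff : ∀ x ∈ Icc 0 p, ∀ t ∈ Ioc 0 t₀, DifferentiableAt ℝ (v x) t)
    (hderiv : ∀ x ∈ Icc 0 p, ∀ t ∈ Ioc 0 t₀,
      (∀ y, v x t ≤ v y t) → v x t ≤ 0 → 0 < deriv (v x) t) :
    ∀ x, ∀ t ∈ Icc 0 t₀, 0 < v x t := by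
  by_contra! hex
  obtain ⟨x, hx, s, hs, hxs, hmin, hbefore⟩ := exists_first_nonpos_of_periodic hp hper hcont hex
  have hs0 : 0 < s := hs.1.lt_of_ne fun h => (h0 x).not_ge (h ▸ hxs)
  have hdecr : deriv (v x) s ≤ 0 :=
    (hdiff x hx s ⟨hs0, hs.2⟩).hasDerivAt.nonpos_of_isMinOn_Ioc hs0 fun t ht =>
      show v x s ≤ v x t from ht.2.eq_or_lt.elim (fun h => h ▸ le_rfl)
        fun h => hxs.trans (hbefore x t ⟨ht.1.le, h⟩).le
  exact (hderiv x hx s ⟨hs0, hs.2⟩ hmin hxs).not_ge hdecr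

theorem nonneg_of_deriv_ge_at_neg_min (hp : 0 < p)
    (hper : ∀ t, Periodic (w · t) p)
    (hcont : ContinuousOn (uncurry w) (Icc 0 p ×ˢ Icc 0 t₀)) (h0 : ∀ x, 0 ≤ w x 0)
    (hdiff : ∀ x ∈ Icc 0 p, ∀ t ∈ Ioc 0 t₀, DifferentiableAt ℝ (w x) t)
    (hderiv : ∀ x ∈ Icc 0 p, ∀ t ∈ Ioc 0 t₀,
      (∀ y, w x t ≤ w y t) → w x t < 0 → Λ * w x t ≤ deriv (w x) t) :
    ∀ x, ∀ t ∈ Icc 0 t₀, 0 ≤ w x t := by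
  have hbarrier : ∀ ε > 0, ∀ x, ∀ t ∈ Icc 0 t₀, 0 < exp (-(Λ * t)) * w x t + ε * (1 + t) := by
    intro ε hε
    have hv : ∀ x ∈ Icc 0 p, ∀ t ∈ Ioc 0 t₀,
        HasDerivAt (fun τ => exp (-(Λ * τ)) * w x τ + ε * (1 + τ))
          (exp (-(Λ * t)) * (deriv (w x) t - Λ * w x t) + ε) t := by
      intro x hx t ht
      exact ((((hasDerivAt_id t).const_mul Λ).neg.exp.mul (hdiff x hx t ht).hasDerivAt).add
        (((hasDerivAt_id t).const_add 1).const_mul ε)).congr_deriv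
          (by simp only [id, Pi.neg_apply]; ring)
    refine pos_of_deriv_pos_at_nonpos_min hp (fun t x => by simp only [hper t x])
      (by fun_prop) (fun x => by simpa using add_pos_of_nonneg_of_pos (h0 x) hε)
      (fun x hx t ht => (hv x hx t ht).differentiableAt) (fun x hx t ht hmin hneg => ?_)
    have hexp : 0 < exp (-(Λ * t)) := exp_pos _
    have hε' : 0 < ε * (1 + t) := mul_pos hε (by linarith [ht.1])
    have hwneg : w x t < 0 := by nlinarith
    have hwmin : ∀ y, w x t ≤ w y t := fun y =>
      le_of_mul_le_mul_left (by linarith [hmin y]) hexp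
    rw [(hv x hx t ht).deriv]
    nlinarith [hderiv x hx t ht hwmin hwneg]
  intro x t ht
  have hexp : 0 < exp (-(Λ * t)) := exp_pos _
  refine (mul_nonneg_iff_of_pos_left hexp).mp (le_of_forall_pos_lt_add fun δ hδ => ?_)
  have h1t : 0 < 1 + t := by linarith [ht.1]
  simpa [div_mul_cancel₀ δ h1t.ne'] using hbarrier (δ / (1 + t)) (div_pos hδ h1t) x t ht

end MaximumPrinciple

section Slices

variable {φ ρ : ℝ → ℝ → ℝ} {D : Set ℝ} {s : Set (ℝ × ℝ)} {n : WithTop ℕ∞} {x t : ℝ}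

theorem contDiff_of_contDiffOn_uncurry (hφ : ContDiffOn ℝ n (uncurry φ) (univ ×ˢ D))
    (ht : t ∈ D) : ContDiff ℝ n (φ · t) :=
  contDiffOn_univ.mp <| hφ.comp (contDiff_id.prodMk contDiff_const).contDiffOn
    fun _ _ => ⟨trivial, ht⟩

theorem differentiableAt_of_contDiffOn_uncurry (hφ : ContDiffOn ℝ n (uncurry φ) s)
    (hn : n ≠ 0) (hs : s ∈ 𝓝 (x, t)) : DifferentiableAt ℝ (φ x) t :=
  ((hφ.differentiableOn hn _ (mem_of_mem_nhds hs)).differentiableAt hs).comp t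
    (differentiableAt_const x |>.prodMk differentiableAt_id)

theorem hasDerivAt_pd1_of_hasFDerivWithinAt {L : ℝ × ℝ →L[ℝ] ℝ}
    (hφ : HasFDerivWithinAt (uncurry φ) L (univ ×ˢ D) (x, t)) (ht : t ∈ D) :
    HasDerivAt (φ · t) (L (1, 0)) x := by
  have hline : HasDerivAt (fun y : ℝ => (y, t)) (1, 0) x :=
    (hasDerivAt_id x).prodMk (hasDerivAt_const x t)
  have hcomp := hφ.comp_hasDerivWithinAt x (hline.hasDerivWithinAt (s := univ))
    fun _ _ => (⟨trivial, ht⟩ : _ ∈ univ ×ˢ D)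
  exact hasDerivWithinAt_univ.mp hcomp

theorem continuousOn_uncurry_pd1 (hφ : ContDiffOn ℝ n (uncurry φ) (univ ×ˢ D))
    (hn : 1 ≤ n) (hD : UniqueDiffOn ℝ D) :
    ContinuousOn (uncurry (pd1 φ)) (univ ×ˢ D) := by
  have hU : UniqueDiffOn ℝ (univ ×ˢ D) := (uniqueDiffOn_univ (𝕜 := ℝ) (E := ℝ)).prod hD
  refine ((hφ.continuousOn_fderivWithin hU hn).clm_apply
    (continuousOn_const (c := ((1, 0) : ℝ × ℝ)))).congr ?_
  rintro ⟨x, t⟩ ⟨-, ht⟩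
  exact (hasDerivAt_pd1_of_hasFDerivWithinAt
    ((hφ.differentiableOn (by positivity) _ ⟨trivial, ht⟩).hasFDerivWithinAt) ht).deriv

theorem Ds_Ds_eq (hφ : DifferentiableAt ℝ (deriv (φ · t)) x)
    (hρ : DifferentiableAt ℝ (ρ · t) x) (hρx : ρ x t ≠ 0) :
    Ds ρ (Ds ρ φ) x t
      = (deriv (deriv (φ · t)) x * ρ x t - pd1 φ x t * deriv (ρ · t) x) / ρ x t ^ 3 := by
  have hquot : HasDerivAt (fun y => pd1 φ y t / ρ y t)
      ((deriv (deriv (φ · t)) x * ρ x t - pd1 φ x t * deriv (ρ · t) x) / ρ x t ^ 2) x :=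
    hφ.hasDerivAt.div hρ.hasDerivAt hρx
  show deriv (fun y => pd1 φ y t / ρ y t) x / ρ x t = _
  rw [hquot.deriv]
  field_simp

end Slices

section InDom

variable {T : ℝ≥0∞} {s t : ℝ}

theorem InDom.mono (ht : InDom T t) (hs : 0 ≤ s) (hst : s ≤ t) : InDom T s :=
  ⟨hs, (ENNReal.ofReal_le_ofReal hst).trans_lt ht.2⟩

theorem setOf_inDom_mem_nhds (ht0 : 0 < t) (ht : InDom T t) : {s | InDom T s} ∈ 𝓝 t :=
  mem_of_superset
    (inter_mem (Ioi_mem_nhds ht0) ((isOpen_Iio.preimage ENNReal.continuous_ofReal).mem_nhds ht.2))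
    fun _ hs => ⟨le_of_lt hs.1, hs.2⟩

theorem uniqueDiffOn_setOf_inDom (hT : 0 < T) : UniqueDiffOn ℝ {t | InDom T t} := by
  have hconv : Convex ℝ {t | InDom T t} :=
    Set.OrdConnected.convex ⟨fun _ hx _ hy _ hz => hy.mono (hx.1.trans hz.1) hz.2⟩
  obtain ⟨r, -, hr0, hrT⟩ := ENNReal.lt_iff_exists_real_btwn.mp hT
  have hr : 0 < r := ENNReal.ofReal_pos.mp hr0
  exact uniqueDiffOn_convex hconv
    ⟨r, mem_interior_iff_mem_nhds.mpr (setOf_inDom_mem_nhds hr ⟨hr.le, hrT⟩)⟩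

end InDom

/-- The polynomial is `(g (κ̂₁₂ + κ̂₂₃) - h (κ̂₂₃ + κ̂₃₁)) (fgh)² / (g - h)`. -/
def reactionCoeff (f g h ρ : ℝ → ℝ → ℝ) (ξ t : ℝ) : ℝ :=
  Ds ρ g ξ t * Ds ρ h ξ t / (g ξ t * h ξ t)
    - 2 * ((g ξ t + h ξ t) ^ 2 * (g ξ t ^ 2 + h ξ t ^ 2) - 2 * f ξ t ^ 2 * g ξ t * h ξ t
      - f ξ t ^ 4) / (f ξ t * g ξ t * h ξ t) ^ 2

namespace GeneralWarpedBerger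

variable {T : ℝ≥0∞} {f g h ρ : ℝ → ℝ → ℝ} {x t : ℝ}

theorem contDiffOn_two (sol : GeneralWarpedBerger T f g h ρ) :
    ContDiffOn ℝ 2 (fun p : ℝ × ℝ => (f p.1 p.2, g p.1 p.2, h p.1 p.2, ρ p.1 p.2))
      (univ ×ˢ {t | InDom T t}) :=
  sol.smooth.of_le (WithTop.coe_le_coe.mpr le_top)

theorem contDiffOn_f (sol : GeneralWarpedBerger T f g h ρ) :
    ContDiffOn ℝ 2 (uncurry f) (univ ×ˢ {t | InDom T t}) :=
  contDiff_fst.comp_contDiffOn sol.contDiffOn_two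

theorem contDiffOn_g (sol : GeneralWarpedBerger T f g h ρ) :
    ContDiffOn ℝ 2 (uncurry g) (univ ×ˢ {t | InDom T t}) :=
  (contDiff_fst.comp contDiff_snd).comp_contDiffOn sol.contDiffOn_two

theorem contDiffOn_h (sol : GeneralWarpedBerger T f g h ρ) :
    ContDiffOn ℝ 2 (uncurry h) (univ ×ˢ {t | InDom T t}) :=
  (contDiff_fst.comp (contDiff_snd.comp contDiff_snd)).comp_contDiffOn sol.contDiffOn_two

theorem contDiffOn_ρ (sol : GeneralWarpedBerger T f g h ρ) :
    ContDiffOn ℝ 2 (uncurry ρ) (univ ×ˢ {t | InDom T t}) :=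
  (contDiff_snd.comp (contDiff_snd.comp contDiff_snd)).comp_contDiffOn sol.contDiffOn_two

theorem continuousOn_reactionCoeff (sol : GeneralWarpedBerger T f g h ρ) :
    ContinuousOn (uncurry (reactionCoeff f g h ρ)) (univ ×ˢ {t | InDom T t}) := by
  have hD := uniqueDiffOn_setOf_inDom sol.T_pos
  have hf := sol.contDiffOn_f.continuousOn
  have hg := sol.contDiffOn_g.continuousOn
  have hh := sol.contDiffOn_h.continuousOn
  have hρ := sol.contDiffOn_ρ.continuousOn
  have hρ0 : ∀ p ∈ univ ×ˢ {t | InDom T t}, ρ p.1 p.2 ≠ 0 := fun p hp =>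
    (sol.ρ_pos _ _ hp.2).ne'
  have hDg : ContinuousOn (uncurry (Ds ρ g)) (univ ×ˢ {t | InDom T t}) :=
    (continuousOn_uncurry_pd1 sol.contDiffOn_g one_le_two hD).div hρ hρ0
  have hDh : ContinuousOn (uncurry (Ds ρ h)) (univ ×ˢ {t | InDom T t}) :=
    (continuousOn_uncurry_pd1 sol.contDiffOn_h one_le_two hD).div hρ hρ0
  have hfgh : ∀ p ∈ univ ×ˢ {t | InDom T t}, 0 < f p.1 p.2 ∧ 0 < g p.1 p.2 ∧ 0 < h p.1 p.2 :=
    fun p hp => ⟨sol.f_pos _ _ hp.2, sol.g_pos _ _ hp.2, sol.h_pos _ _ hp.2⟩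
  refine ((hDg.mul hDh).div (hg.mul hh) fun p hp => ?_).sub
    ((continuousOn_const.mul (by fun_prop)).div (by fun_prop) fun p hp => ?_)
  · exact (mul_pos (hfgh p hp).2.1 (hfgh p hp).2.2).ne'
  · obtain ⟨hfp, hgp, hhp⟩ := hfgh p hp
    positivity

theorem pdt_sub_eq (sol : GeneralWarpedBerger T f g h ρ) (ht0 : 0 < t) (ht : InDom T t)
    (hcrit : pd1 g x t = pd1 h x t) :
    pdt h x t - pdt g x t = (Ds ρ (Ds ρ h) x t - Ds ρ (Ds ρ g) x t)
      + reactionCoeff f g h ρ x t * (h x t - g x t) := by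
  have hf := (sol.f_pos x t ht).ne'
  have hg := (sol.g_pos x t ht).ne'
  have hh := (sol.h_pos x t ht).ne'
  have hρ := (sol.ρ_pos x t ht).ne'
  rw [sol.eq_h x t ht0 ht, sol.eq_g x t ht0 ht]
  simp only [reactionCoeff, hk12, hk23, hk31, Ds, hcrit]
  field_simp
  ring

theorem reactionCoeff_mul_le_pdt_sub (sol : GeneralWarpedBerger T f g h ρ) (ht0 : 0 < t)
    (ht : InDom T t) (hmin : ∀ y, h x t - g x t ≤ h y t - g y t) :
    reactionCoeff f g h ρ x t * (h x t - g x t) ≤ pdt h x t - pdt g x t := by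
  have hg := contDiff_of_contDiffOn_uncurry sol.contDiffOn_g ht
  have hh := contDiff_of_contDiffOn_uncurry sol.contDiffOn_h ht
  have hρ := contDiff_of_contDiffOn_uncurry sol.contDiffOn_ρ ht
  have hρx := sol.ρ_pos x t ht
  have hderiv_sub : deriv (fun y => h y t - g y t) = fun y => pd1 h y t - pd1 g y t :=
    funext fun y =>
      deriv_fun_sub (hh.differentiable two_ne_zero y) (hg.differentiable two_ne_zero y)
  have hloc : IsLocalMin (fun y => h y t - g y t) x := Eventually.of_forall hmin
  have hcrit : pd1 g x t = pd1 h x t := by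
    have := hloc.deriv_eq_zero
    rw [hderiv_sub] at this
    linarith
  have hconvex : 0 ≤ deriv (deriv (h · t)) x - deriv (deriv (g · t)) x := by
    have := hloc.deriv_deriv_nonneg (hh.continuous.sub hg.continuous).continuousAt
    rwa [hderiv_sub, deriv_fun_sub (f := fun y => pd1 h y t) (g := fun y => pd1 g y t)
      (hh.differentiable_deriv_two x) (hg.differentiable_deriv_two x)] at this
  have hdiffusion : 0 ≤ Ds ρ (Ds ρ h) x t - Ds ρ (Ds ρ g) x t := by
    rw [Ds_Ds_eq (hh.differentiable_deriv_two x) (hρ.differentiable two_ne_zero x) hρx.ne',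
      Ds_Ds_eq (hg.differentiable_deriv_two x) (hρ.differentiable two_ne_zero x) hρx.ne', hcrit,
      ← sub_div]
    exact div_nonneg (by nlinarith) (by positivity)
  rw [sol.pdt_sub_eq ht0 ht hcrit]
  linarith

end GeneralWarpedBerger

/-- For a general warped Berger solution of Ricci flow on `S¹ × S³`,
any ordering among the warping functions that holds at `t = 0` (here: `g ≤ h`) is
preserved for all `t ∈ [0,T)`. -/
theorem ordering_preserved (T : ℝ≥0∞) (f g h ρ : ℝ → ℝ → ℝ)
    (sol : GeneralWarpedBerger T f g h ρ)
    (h0 : ∀ ξ : ℝ, g ξ 0 ≤ h ξ 0) :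
    ∀ ξ t : ℝ, InDom T t → g ξ t ≤ h ξ t := by
  intro ξ t ht
  have hbox : Icc 0 (2 * π) ×ˢ Icc 0 t ⊆ univ ×ˢ {s | InDom T s} :=
    prod_mono (subset_univ _) fun s hs => ht.mono hs.1 hs.2
  obtain ⟨Λ, hΛ⟩ := (isCompact_Icc.prod isCompact_Icc).bddAbove_image
    (sol.continuousOn_reactionCoeff.mono hbox)
  have hdom : ∀ τ ∈ Ioc 0 t, InDom T τ := fun τ hτ => ht.mono hτ.1.le hτ.2
  have hdiff : ∀ {φ : ℝ → ℝ → ℝ}, ContDiffOn ℝ 2 (uncurry φ) (univ ×ˢ {s | InDom T s}) →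
      ∀ x, ∀ τ ∈ Ioc 0 t, DifferentiableAt ℝ (φ x) τ := fun hφ x τ hτ =>
    differentiableAt_of_contDiffOn_uncurry hφ two_ne_zero
      (prod_mem_nhds univ_mem (setOf_inDom_mem_nhds hτ.1 (hdom τ hτ)))
  have hgh : ∀ x, ∀ τ ∈ Icc 0 t, 0 ≤ h x τ - g x τ := by
    refine nonneg_of_deriv_ge_at_neg_min (Λ := Λ) two_pi_pos
      (fun τ x => by simp only [sol.h_per, sol.g_per])
      ((sol.contDiffOn_h.continuousOn.sub sol.contDiffOn_g.continuousOn).mono hbox)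
      (fun x => sub_nonneg.mpr (h0 x))
      (fun x _ τ hτ => (hdiff sol.contDiffOn_h x τ hτ).sub (hdiff sol.contDiffOn_g x τ hτ))
      fun x hx τ hτ hmin hneg => ?_
    rw [deriv_fun_sub (hdiff sol.contDiffOn_h x τ hτ) (hdiff sol.contDiffOn_g x τ hτ)]
    calc Λ * (h x τ - g x τ) ≤ reactionCoeff f g h ρ x τ * (h x τ - g x τ) :=
          mul_le_mul_of_nonpos_right (hΛ ⟨(x, τ), ⟨hx, hτ.1.le, hτ.2⟩, rfl⟩) hneg.le
      _ ≤ pdt h x τ - pdt g x τ := sol.reactionCoeff_mul_le_pdt_sub hτ.1 (hdom τ hτ) hmin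
  exact sub_nonneg.mp (hgh ξ t ⟨ht.1, le_rfl⟩)
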